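/- arXiv:math/0306381 — 4 statements merged into one kernel-verified Lean document; each statement's English description precedes it below -/
import Mathlib

section
/- A continuous homomorphism f : M → N between Polish (separable, completely metrizable) topological abelian groups induces a topological isomorphism M/ker(f) ≅ im(f) if and only if the image of f is closed in N. -/
set_option maxHeartbeats 1000000
set_option linter.unusedSectionVars false
set_option linter.unusedVariables false
open Filter Set Topology

variable {M N : Type} [AddCommGroup M] [UniformSpace M] [IsUniformAddGroup M]
    [AddCommGroup N] [UniformSpace N] [IsUniformAddGroup N]
    [T2Space M] [T2Space N] [CompleteSpace M] [CompleteSpace N]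
    [SecondCountableTopology M] [SecondCountableTopology N]

/-- Countably generated uniformity for a first countable uniform additive group. -/
theorem aux_cg (G : Type) [AddCommGroup G] [UniformSpace G] [IsUniformAddGroup G]
    [FirstCountableTopology G] : (uniformity G).IsCountablyGenerated := by
  rw [uniformity_eq_comap_nhds_zero]
  exact Filter.comap.isCountablyGenerated _ _

theorem aux_baire (G : Type) [AddCommGroup G] [UniformSpace G] [IsUniformAddGroup G]
    [FirstCountableTopology G] [CompleteSpace G] : BaireSpace G := by
  have := aux_cg G
  letI := UniformSpace.pseudoMetricSpace G
  infer_instance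

theorem aux_main
    (hM : ∀ U ∈ nhds (0 : M), ∃ V : AddSubgroup M, IsOpen (V : Set M) ∧ (V : Set M) ⊆ U)
    (f : M →+ N) (hf : Continuous f) (hclosed : IsClosed (Set.range f)) :
    ∀ U ∈ nhds (0 : M), f.rangeRestrict '' U ∈ nhds (0 : f.range) := by
  intro U hU
  obtain ⟨V, hVopen, hVU⟩ := hM U hU
  set R := f.range with hR
  set g : M →+ R := f.rangeRestrict with hg
  have hgc : Continuous g := hf.subtype_mk _
  have hgsurj : Function.Surjective g := f.rangeRestrict_surjective
  haveI : CompleteSpace R := by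
    have h : IsClosed (R : Set N) := hclosed
    exact h.completeSpace_coe
  haveI : SecondCountableTopology R := by
    exact TopologicalSpace.Subtype.secondCountableTopology (R : Set N)
  haveI : BaireSpace R := aux_baire R
  -- Step A: for every open subgroup W of M, the closure of g '' W is a nbhd of 0 in R
  have stepA : ∀ W : AddSubgroup M, IsOpen (W : Set M) →
      closure (g '' (W : Set M)) ∈ nhds (0 : R) := by
    intro W hW
    obtain ⟨D, hDcount, hDdense⟩ := TopologicalSpace.exists_countable_dense M
    haveI : Countable D := hDcount.to_subtype
    set C : Set R := closure (g '' (W : Set M)) with hC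
    -- translates of C cover R
    have hcover : ⋃ d : D, (fun z => g (d : M) + z) '' C = univ := by
      apply eq_univ_iff_forall.2
      intro y
      obtain ⟨x, rfl⟩ := hgsurj y
      have hxV : IsOpen ((fun v => x + v) '' (W : Set M)) :=
        (Homeomorph.addLeft x).isOpenMap _ hW
      have hne : ((fun v => x + v) '' (W : Set M)).Nonempty :=
        ⟨x, ⟨0, W.zero_mem, by simp⟩⟩
      obtain ⟨d, ⟨v, hvW, hdv⟩, hdD⟩ := hDdense.inter_open_nonempty _ hxV hne
      refine mem_iUnion.2 ⟨⟨d, hdD⟩, ⟨g (x - d), ?_, ?_⟩⟩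
      · exact subset_closure ⟨x - d, by rw [← hdv]; simpa using W.neg_mem hvW, rfl⟩
      · simp [← map_add]
    obtain ⟨d, hd⟩ := nonempty_interior_of_iUnion_of_closed
      (fun d : D => ((Homeomorph.addLeft (g (d : M))).isClosedMap _ isClosed_closure)) hcover
    -- so C has nonempty interior
    have hCint : (interior C).Nonempty := by
      obtain ⟨y, hy⟩ := hd
      rw [← Homeomorph.image_interior] at hy
      obtain ⟨z, hz, rfl⟩ := hy
      exact ⟨z, hz⟩
    -- a closed subgroup-closure with interior point is a nbhd of 0
    obtain ⟨y0, hy0⟩ := hCint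
    have hCsub : ∀ a ∈ C, ∀ b ∈ C, a - b ∈ C := by
      intro a ha b hb
      have : C = ((AddSubgroup.map g W).topologicalClosure : Set R) := rfl
      rw [this] at ha hb ⊢
      exact AddSubgroup.sub_mem _ ha hb
    have h0 : (Homeomorph.subRight y0) '' interior C ∈ nhds (0 : R) := by
      have hopen : IsOpen ((Homeomorph.subRight y0) '' interior C) :=
        (Homeomorph.subRight y0).isOpenMap _ isOpen_interior
      refine hopen.mem_nhds ⟨y0, hy0, by simp⟩
    refine Filter.mem_of_superset h0 ?_
    rintro - ⟨z, hz, rfl⟩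
    exact hCsub z (interior_subset hz) y0 (interior_subset hy0)
  
  -- construct a decreasing basis of open subgroups at 0 contained in V
  obtain ⟨b, hb⟩ := (nhds (0 : M)).exists_antitone_basis
  choose W hWopen hWsub using fun n => hM (b n) (hb.mem n)
  set Vs : ℕ → AddSubgroup M := fun n => Nat.rec V (fun k ih => ih ⊓ W k) n with hVsdef
  have hVsSucc : ∀ n, Vs (n + 1) = Vs n ⊓ W n := fun n => rfl
  have hVsOpen : ∀ n, IsOpen (Vs n : Set M) := by
    intro n
    induction n with
    | zero => exact hVopen
    | succ k ih =>
      have : (Vs (k + 1) : Set M) = (Vs k : Set M) ∩ (W k : Set M) := rfl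
      rw [this]; exact ih.inter (hWopen k)
  have hanti : Antitone Vs := antitone_nat_of_succ_le fun n => by
    rw [hVsSucc]; exact inf_le_left
  have hVsV : ∀ n, Vs n ≤ V := fun n => hanti (Nat.zero_le n)
  have hVsBasis : (nhds (0 : M)).HasBasis (fun _ : ℕ => True) (fun n => (Vs n : Set M)) := by
    rw [Filter.hasBasis_iff]
    intro t
    constructor
    · intro ht
      obtain ⟨n, -, hn⟩ := hb.toHasBasis.mem_iff.1 ht
      refine ⟨n + 1, trivial, subset_trans ?_ (subset_trans (hWsub n) hn)⟩
      rw [hVsSucc]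
      exact fun x hx => hx.2
    · rintro ⟨n, -, hn⟩
      exact Filter.mem_of_superset ((hVsOpen n).mem_nhds (Vs n).zero_mem) hn
  -- Step B : closure (g '' V) ⊆ g '' V
  have stepB : closure (g '' (V : Set M)) ⊆ g '' (V : Set M) := by
    intro y hy
    have step : ∀ n (z : R), z ∈ closure (g '' (Vs n : Set M)) →
        ∃ x, x ∈ Vs n ∧ z - g x ∈ closure (g '' (Vs (n + 1) : Set M)) := by
      intro n z hz
      have hnbhd : closure (g '' (Vs (n + 1) : Set M)) ∈ nhds (0 : R) :=
        stepA (Vs (n + 1)) (hVsOpen (n + 1))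
      have hmem : (fun w : R => z - w) ⁻¹' closure (g '' (Vs (n + 1) : Set M)) ∈ nhds z := by
        have hc : ContinuousAt (fun w : R => z - w) z :=
          (continuous_const.sub continuous_id).continuousAt
        apply hc.preimage_mem_nhds
        simpa using hnbhd
      obtain ⟨w, hw1, x, hxVs, rfl⟩ := mem_closure_iff_nhds.1 hz _ hmem
      exact ⟨x, hxVs, hw1⟩
    choose xf hxf1 hxf2 using step
    have hy0 : y ∈ closure (g '' (Vs 0 : Set M)) := hy
    let T : ℕ → Type := fun n => {s : M // y - g s ∈ closure (g '' ((Vs (n + 1)) : Set M))}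
    let seq : ∀ n, T n := fun n => Nat.rec
      (⟨xf 0 y hy0, by simpa using hxf2 0 y hy0⟩)
      (fun k ih => ⟨ih.1 + xf (k + 1) (y - g ih.1) ih.2, by
        have h := hxf2 (k + 1) (y - g ih.1) ih.2
        rw [g.map_add, ← sub_sub]
        exact h⟩) n
    set s : ℕ → M := fun n => (seq n).1 with hs
    have hdiff : ∀ n, s (n + 1) - s n ∈ Vs (n + 1) := by
      intro n
      have h1 : s (n + 1) = s n + xf (n + 1) (y - g (s n)) (seq n).2 := rfl
      rw [h1, add_sub_cancel_left]
      exact hxf1 (n + 1) (y - g (s n)) (seq n).2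
    have hmemV : ∀ n, s n ∈ (V : Set M) := by
      intro n
      induction n with
      | zero => exact hVsV 0 (hxf1 0 y hy0)
      | succ k ih =>
        have h1 : s (k + 1) = s k + xf (k + 1) (y - g (s k)) (seq k).2 := rfl
        rw [h1]
        exact V.add_mem ih (hVsV (k + 1) (hxf1 (k + 1) (y - g (s k)) (seq k).2))
    have hdiff2 : ∀ n m, n ≤ m → s m - s n ∈ Vs (n + 1) := by
      intro n m h
      induction m, h using Nat.le_induction with
      | base => simpa using (Vs (n + 1)).zero_mem
      | succ m' hnm ih =>
        have heq : s (m' + 1) - s n = (s (m' + 1) - s m') + (s m' - s n) := by abel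
        rw [heq]
        exact (Vs (n + 1)).add_mem (hanti (Nat.succ_le_succ hnm) (hdiff m')) ih
    have hUb : (uniformity M).HasBasis (fun _ : ℕ => True)
        (fun n => {p : M × M | p.2 - p.1 ∈ (Vs n : Set M)}) := by
      rw [uniformity_eq_comap_nhds_zero M]
      exact hVsBasis.comap _
    have hcauchy : CauchySeq s := by
      refine hUb.cauchySeq_iff.2 fun i _ => ⟨i, fun m hm n hn => ?_⟩
      have : s n - s m = (s n - s i) - (s m - s i) := by abel
      have h2 : s n - s m ∈ Vs (i + 1) := by
        rw [this]
        exact (Vs (i + 1)).sub_mem (hdiff2 i n hn) (hdiff2 i m hm)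
      exact hanti (Nat.le_succ i) h2
    obtain ⟨x, hx⟩ := cauchySeq_tendsto_of_complete hcauchy
    have hxV : x ∈ (V : Set M) :=
      (V.isClosed_of_isOpen hVopen).mem_of_tendsto hx (Filter.Eventually.of_forall hmemV)
    have h1 : Filter.Tendsto (fun n => g (s n)) Filter.atTop (nhds (g x)) :=
      (hgc.tendsto x).comp hx
    have h2 : Filter.Tendsto (fun n => y - g (s n)) Filter.atTop (nhds (0 : R)) := by
      refine (closed_nhds_basis (0 : R)).tendsto_right_iff.2 ?_
      rintro t ⟨htn, htc⟩
      have hgt : ⇑g ⁻¹' t ∈ nhds (0 : M) := by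
        have := hgc.continuousAt (x := (0 : M))
        apply this.preimage_mem_nhds
        rwa [map_zero]
      obtain ⟨n₀, -, hn₀⟩ := hVsBasis.mem_iff.1 hgt
      have hsub : closure (g '' (Vs n₀ : Set M)) ⊆ t := by
        rw [← htc.closure_eq]
        exact closure_mono (by rintro - ⟨u, hu, rfl⟩; exact hn₀ hu)
      refine Filter.eventually_atTop.2 ⟨n₀, fun m hm => hsub ?_⟩
      have hmono : (Vs (m + 1) : Set M) ⊆ (Vs n₀ : Set M) :=
        SetLike.coe_subset_coe.mpr (hanti (show n₀ ≤ m + 1 by omega))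
      have hm2 : y - g (s m) ∈ closure (g '' (Vs (m + 1) : Set M)) := (seq m).2
      exact closure_mono (Set.image_mono hmono) hm2
    have h3 : Filter.Tendsto (fun n => y - g (s n)) Filter.atTop (nhds (y - g x)) :=
      tendsto_const_nhds.sub h1
    have h4 : y - g x = 0 := tendsto_nhds_unique h3 h2
    exact ⟨x, hxV, (sub_eq_zero.mp h4).symm⟩
  have hVnbhd : g '' (V : Set M) ∈ nhds (0 : R) :=
    Filter.mem_of_superset (stepA V hVopen) stepB
  exact Filter.mem_of_superset hVnbhd (Set.image_mono hVU)

theorem aux_isOpenMap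
    (hM : ∀ U ∈ nhds (0 : M), ∃ V : AddSubgroup M, IsOpen (V : Set M) ∧ (V : Set M) ⊆ U)
    (f : M →+ N) (hf : Continuous f) (hclosed : IsClosed (Set.range f)) :
    IsOpenMap f.rangeRestrict := by
  apply IsOpenMap.of_nhds_le
  intro x
  have h0 : nhds (0 : f.range) ≤ Filter.map f.rangeRestrict (nhds (0 : M)) := by
    intro s hs
    rw [Filter.mem_map] at hs
    exact Filter.mem_of_superset (aux_main hM f hf hclosed _ hs)
      (Set.image_preimage_subset _ _)
  set g := f.rangeRestrict with hg
  have e1 : nhds (g x) = Filter.map (fun z => g x + z) (nhds (0 : f.range)) := by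
    have := (Homeomorph.addLeft (g x)).map_nhds_eq (0 : f.range)
    simp only [Homeomorph.coe_addLeft, add_zero] at this
    exact this.symm
  have e2 : Filter.map (fun z => g x + z) (Filter.map g (nhds (0 : M)))
      = Filter.map g (nhds x) := by
    rw [Filter.map_map]
    have hx : nhds x = Filter.map (fun m => x + m) (nhds (0 : M)) := by
      have := (Homeomorph.addLeft x).map_nhds_eq (0 : M)
      simp only [Homeomorph.coe_addLeft, add_zero] at this
      exact this.symm
    rw [hx, Filter.map_map]
    congr 1
    funext m
    simp [g.map_add]
  calc nhds (g x) = Filter.map (fun z => g x + z) (nhds (0 : f.range)) := e1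
    _ ≤ Filter.map (fun z => g x + z) (Filter.map g (nhds (0 : M))) := Filter.map_mono h0
    _ = Filter.map g (nhds x) := e2

theorem aux_phi_mk (f : M →+ N) (x : M) :
    ((QuotientAddGroup.quotientKerEquivRange f) (QuotientAddGroup.mk x) : f.range)
      = f.rangeRestrict x := rfl

/-- A continuous homomorphism `f : M → N` between Polish
(separable, completely metrizable) topological abelian groups (Hausdorff, complete,
second countable, with a basis of neighborhoods of zero consisting of open subgroups)
induces a topological isomorphism `M ⧸ ker f ≅ im f` if and only if the image of `f`
is closed in `N`. -/
theorem stmt_0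
    (M N : Type) [AddCommGroup M] [UniformSpace M] [IsUniformAddGroup M]
    [AddCommGroup N] [UniformSpace N] [IsUniformAddGroup N]
    [T2Space M] [T2Space N] [CompleteSpace M] [CompleteSpace N]
    [SecondCountableTopology M] [SecondCountableTopology N]
    (hM : ∀ U ∈ nhds (0 : M), ∃ V : AddSubgroup M, IsOpen (V : Set M) ∧ (V : Set M) ⊆ U)
    (hN : ∀ U ∈ nhds (0 : N), ∃ V : AddSubgroup N, IsOpen (V : Set N) ∧ (V : Set N) ⊆ U)
    (f : M →+ N) (hf : Continuous f) :
    (∃ e : (M ⧸ f.ker) ≃ₜ Set.range f,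
        ∀ x : M, (e (QuotientAddGroup.mk x) : N) = f x) ↔
      IsClosed (Set.range f) := by
  constructor
  · rintro ⟨e0, he0⟩
    let e' : (M ⧸ f.ker) ≃ₜ f.range := e0
    have he' : ∀ x : M, (e' (QuotientAddGroup.mk x) : N) = f x := he0
    set φ := QuotientAddGroup.quotientKerEquivRange f with hφ
    have hfun : ∀ q : M ⧸ f.ker, e' q = φ q := by
      intro q
      induction q using QuotientAddGroup.induction_on with
      | H x =>
        apply Subtype.ext
        rw [he' x, aux_phi_mk]
        rfl
    have hfun' : ∀ y : f.range, e'.symm y = φ.symm y := by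
      intro y
      apply e'.injective
      rw [hfun (φ.symm y), AddEquiv.apply_symm_apply, Homeomorph.apply_symm_apply]
    letI uQ : UniformSpace (M ⧸ f.ker) := IsTopologicalAddGroup.rightUniformSpace _
    haveI : IsUniformAddGroup (M ⧸ f.ker) := isUniformAddGroup_of_addCommGroup
    haveI : CompleteSpace (M ⧸ f.ker) := QuotientAddGroup.completeSpace_right M f.ker
    have uc1 : UniformContinuous (φ : M ⧸ f.ker → f.range) := by
      apply uniformContinuous_addMonoidHom_of_continuous (hom := (M ⧸ f.ker) →+ f.range)
        (f := φ.toAddMonoidHom)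
      have : ⇑φ.toAddMonoidHom = ⇑e' := funext fun q => (hfun q).symm
      rw [this]
      exact e'.continuous
    have uc2 : UniformContinuous (φ.symm : f.range → M ⧸ f.ker) := by
      apply uniformContinuous_addMonoidHom_of_continuous (hom := f.range →+ (M ⧸ f.ker))
        (f := φ.symm.toAddMonoidHom)
      have : ⇑φ.symm.toAddMonoidHom = ⇑e'.symm := funext fun y => (hfun' y).symm
      rw [this]
      exact e'.symm.continuous
    have ue : (M ⧸ f.ker) ≃ᵤ f.range := ⟨φ.toEquiv, uc1, uc2⟩
    haveI hcs : CompleteSpace f.range := ue.completeSpace_iff.1 inferInstance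
    have hic : IsComplete (f.range : Set N) := by
      rw [← completeSpace_coe_iff_isComplete]
      exact hcs
    exact hic.isClosed
  · intro hclosed
    set g := f.rangeRestrict with hg
    have hgc : Continuous g := hf.subtype_mk _
    have hgopen : IsOpenMap g := aux_isOpenMap hM f hf hclosed
    set φ := QuotientAddGroup.quotientKerEquivRange f with hφ
    have hcont : Continuous (φ : M ⧸ f.ker → f.range) := by
      rw [(QuotientAddGroup.isQuotientMap_mk f.ker).continuous_iff]
      have : (⇑φ ∘ QuotientAddGroup.mk) = ⇑g := funext fun x => aux_phi_mk f x
      rw [this]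
      exact hgc
    have hopenφ : IsOpenMap (φ : M ⧸ f.ker → f.range) := by
      intro U hU
      have himg : ⇑φ '' U = g '' (QuotientAddGroup.mk ⁻¹' U) := by
        ext y
        constructor
        · rintro ⟨q, hq, rfl⟩
          obtain ⟨x, rfl⟩ := QuotientAddGroup.mk_surjective q
          exact ⟨x, hq, (aux_phi_mk f x).symm⟩
        · rintro ⟨x, hx, rfl⟩
          exact ⟨QuotientAddGroup.mk x, hx, aux_phi_mk f x⟩
      rw [himg]
      exact hgopen _ (hU.preimage continuous_quot_mk)
    let e : (M ⧸ f.ker) ≃ₜ f.range :=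
      Equiv.toHomeomorphOfContinuousOpen φ.toEquiv hcont hopenφ
    have he : ∀ x : M, (e (QuotientAddGroup.mk x) : N) = f x := fun x => by
      show ((φ (QuotientAddGroup.mk x) : f.range) : N) = f x
      rw [aux_phi_mk]
      rfl
    exact ⟨e, he⟩
end

section
/- Every surjective continuous homomorphism between second-countable profinite abelian groups admits a continuous section (as a continuous map, not necessarily a homomorphism). -/
open Filter Topology Set

/-- In a compact totally disconnected Hausdorff additive group, every neighborhood of `0`
contains an open subgroup. -/
lemma aux_exists_openAddSubgroup {M : Type} [AddCommGroup M] [TopologicalSpace M]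
    [IsTopologicalAddGroup M] [CompactSpace M] [T2Space M] [TotallyDisconnectedSpace M]
    {U : Set M} (hU : U ∈ 𝓝 (0 : M)) :
    ∃ V : OpenAddSubgroup M, (V : Set M) ⊆ U := by
  obtain ⟨S, ⟨h0S, hSclopen⟩, hSU⟩ := (nhds_basis_clopen (0 : M)).mem_iff.mp hU
  obtain ⟨H, hH⟩ := IsTopologicalAddGroup.exist_openAddSubgroup_sub_clopen_nhds_of_zero hSclopen h0S
  exact ⟨H, hH.trans hSU⟩

/-- A cluster point of a sequence which is eventually in a closed set lies in that set. -/
lemma aux_mapClusterPt_mem {X : Type} [TopologicalSpace X] {u : ℕ → X} {x : X}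
    (hx : MapClusterPt x atTop u) {C : Set X} (hC : IsClosed C) {m : ℕ}
    (h : ∀ n, m ≤ n → u n ∈ C) : x ∈ C := by
  have hle : map u atTop ≤ 𝓟 C := by
    rw [le_principal_iff, mem_map]
    exact mem_of_superset (Ici_mem_atTop m) fun n hn => h n hn
  have : ClusterPt x (𝓟 C) := hx.clusterPt.mono hle
  rw [← mem_closure_iff_clusterPt] at this
  exact hC.closure_subset this

/-- Every surjective continuous homomorphism between second-countable
profinite abelian groups (compact Hausdorff totally disconnected topological abelian
groups) admits a continuous section (as a continuous map, not necessarily a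
homomorphism). -/
theorem stmt_1
    (M N : Type) [AddCommGroup M] [TopologicalSpace M] [IsTopologicalAddGroup M]
    [AddCommGroup N] [TopologicalSpace N] [IsTopologicalAddGroup N]
    [CompactSpace M] [T2Space M] [TotallyDisconnectedSpace M] [SecondCountableTopology M]
    [CompactSpace N] [T2Space N] [TotallyDisconnectedSpace N] [SecondCountableTopology N]
    (f : M →+ N) (hf : Continuous f) (hsurj : Function.Surjective f) :
    ∃ s : N → M, Continuous s ∧ ∀ y : N, f (s y) = y := by
  -- `f` is an open map
  have hopen : IsOpenMap f := f.isOpenMap_of_sigmaCompact hsurj hf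
  -- countable antitone bases of neighborhoods of `0`
  obtain ⟨U, hU⟩ := (𝓝 (0 : M)).exists_antitone_basis
  obtain ⟨W, hW⟩ := (𝓝 (0 : N)).exists_antitone_basis
  -- a decreasing sequence of open subgroups of `M`
  have step : ∀ (n : ℕ) (P : OpenAddSubgroup M), ∃ V : OpenAddSubgroup M,
      (V : Set M) ⊆ U n ∧ (V : Set M) ⊆ f ⁻¹' (W n) ∧ (V : Set M) ⊆ P := by
    intro n P
    have h1 : U n ∩ f ⁻¹' (W n) ∩ (P : Set M) ∈ 𝓝 (0 : M) := by
      refine Filter.inter_mem (Filter.inter_mem (hU.mem n) ?_) ?_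
      · exact hf.continuousAt.preimage_mem_nhds (by simpa using hW.mem n)
      · exact P.mem_nhds_zero
    obtain ⟨V, hV⟩ := aux_exists_openAddSubgroup h1
    exact ⟨V, fun x hx => ((hV hx).1).1, fun x hx => ((hV hx).1).2, fun x hx => (hV hx).2⟩
  choose Vstep hV1 hV2 hV3 using step
  set V : ℕ → OpenAddSubgroup M := fun n =>
    Nat.rec (⊤ : OpenAddSubgroup M) (fun n ih => Vstep n ih) n with hVdef
  have hVsucc : ∀ n, V (n + 1) = Vstep n (V n) := fun n => rfl
  have hVU : ∀ n, (V (n + 1) : Set M) ⊆ U n := fun n => hV1 n (V n)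
  have hVW : ∀ n, (V (n + 1) : Set M) ⊆ f ⁻¹' (W n) := fun n => hV2 n (V n)
  have hVmono : ∀ n, (V (n + 1) : Set M) ⊆ V n := fun n => hV3 n (V n)
  have hVle : ∀ m n, m ≤ n → (V n : Set M) ⊆ V m := by
    intro m n hmn
    induction hmn with
    | refl => exact fun x hx => hx
    | step h ih => exact fun x hx => ih (hVmono _ hx)
  -- the images `f '' (V n)`, as subgroups of `N`
  set Wsub : ℕ → AddSubgroup N := fun n => AddSubgroup.map f (V n).toAddSubgroup with hWsubdef
  have hWsubOpen : ∀ n, IsOpen (Wsub n : Set N) := by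
    intro n
    have : (Wsub n : Set N) = f '' (V n) := by
      simp [hWsubdef, AddSubgroup.coe_map]
    rw [this]
    exact hopen _ (V n).isOpen
  have hWsubClosed : ∀ n, IsClosed (Wsub n : Set N) := by
    intro n
    have : (Wsub n : Set N) = f '' (V n) := by
      simp [hWsubdef, AddSubgroup.coe_map]
    rw [this]
    exact (((V n).isClosed.isCompact).image hf).isClosed
  have hWsubW : ∀ n, (Wsub (n + 1) : Set N) ⊆ W n := by
    intro n y hy
    obtain ⟨v, hv, rfl⟩ := hy
    exact hVW n hv
  -- approximate sections
  set Good : ℕ → (N → M) → Prop :=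
    fun n g => Continuous g ∧ ∀ y, y - f (g y) ∈ Wsub n with hGood
  have good0 : Good 0 (fun _ => 0) := by
    refine ⟨continuous_const, fun y => ?_⟩
    obtain ⟨x, hx⟩ := hsurj (y - f 0)
    exact ⟨x, trivial, hx⟩
  have stepg : ∀ (n : ℕ) (g : N → M), Good n g →
      ∃ g' : N → M, Good (n + 1) g' ∧ ∀ y, g' y - g y ∈ (V n : Set M) := by
    intro n g hg
    classical
    haveI : DiscreteTopology (N ⧸ Wsub (n + 1)) :=
      QuotientAddGroup.discreteTopology (hWsubOpen (n + 1))
    set π : N →+ N ⧸ Wsub (n + 1) := QuotientAddGroup.mk' (Wsub (n + 1)) with hπ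
    set d : N → N := fun y => y - f (g y) with hd
    have hdcont : Continuous d := continuous_id.sub (hf.comp hg.1)
    set rep : (N ⧸ Wsub (n + 1)) → M := fun z =>
      if h : ∃ m : M, m ∈ V n ∧ π (f m) = z then h.choose else 0 with hrep
    set c : N → M := fun y => rep (π (d y)) with hc
    have hex : ∀ y : N, ∃ m : M, m ∈ V n ∧ π (f m) = π (d y) := by
      intro y
      obtain ⟨v, hv, hfv⟩ := hg.2 y
      exact ⟨v, hv, by rw [hfv]⟩
    have hcmem : ∀ y, c y ∈ V n ∧ π (f (c y)) = π (d y) := by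
      intro y
      have h := hex y
      simp only [hc, hrep, dif_pos h]
      exact h.choose_spec
    have hccont : Continuous c := by
      have h1 : Continuous (fun y : N => π (d y)) :=
        QuotientAddGroup.continuous_mk.comp hdcont
      exact (continuous_of_discreteTopology (f := rep)).comp h1
    refine ⟨fun y => g y + c y, ⟨hg.1.add hccont, fun y => ?_⟩, fun y => by
      simpa using (hcmem y).1⟩
    have h2 : π (d y - f (c y)) = 0 := by
      rw [map_sub, (hcmem y).2, sub_self]
    have h3 : d y - f (c y) ∈ Wsub (n + 1) :=
      (QuotientAddGroup.eq_zero_iff _).mp h2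
    have h4 : y - f (g y + c y) = d y - f (c y) := by
      simp only [hd, map_add]; abel
    rw [h4]
    exact h3
  choose F hF1 hF2 using stepg
  set seq : ∀ n : ℕ, {g : N → M // Good n g} := fun n =>
    Nat.rec ⟨fun _ => 0, good0⟩ (fun n p => ⟨F n p.1 p.2, hF1 n p.1 p.2⟩) n with hseqdef
  set g : ℕ → N → M := fun n => (seq n).1 with hgdef
  have hgood : ∀ n, Good n (g n) := fun n => (seq n).2
  have hdiff : ∀ n y, g (n + 1) y - g n y ∈ (V n : Set M) := fun n => hF2 n (g n) (hgood n)
  -- telescoping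
  have htel : ∀ m n, m ≤ n → ∀ y, g n y - g m y ∈ (V m : Set M) := by
    intro m n hmn
    induction hmn with
    | refl => intro y; simpa using (V m).zero_mem
    | @step k h ih =>
        intro y
        have h1 : g (k + 1) y - g m y = (g (k + 1) y - g k y) + (g k y - g m y) := by abel
        rw [h1]
        exact (V m).add_mem (hVle m k h (hdiff k y)) (ih y)
  -- limit via cluster points
  have hcp : ∀ y : N, ∃ x : M, MapClusterPt x atTop (fun n => g n y) := by
    intro y
    obtain ⟨x, hx⟩ := exists_clusterPt_of_compactSpace (map (fun n => g n y) atTop)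
    exact ⟨x, hx⟩
  choose s hs using hcp
  -- `s y` is close to every `g m y`
  have hclose : ∀ (m : ℕ) (y : N), s y - g m y ∈ (V m : Set M) := by
    intro m y
    have hC : IsClosed ((fun z : M => z - g m y) ⁻¹' (V m : Set M)) :=
      (V m).isClosed.preimage (continuous_id.sub continuous_const)
    exact aux_mapClusterPt_mem (hs y) hC (fun n hn => htel m n hn y)
  refine ⟨s, ?_, ?_⟩
  · -- continuity
    rw [continuous_iff_continuousAt]
    intro y₀
    rw [ContinuousAt, (nhds_basis_opens (s y₀)).tendsto_right_iff]
    rintro O ⟨hsO, hOopen⟩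
    have h1 : {x : M | s y₀ + x ∈ O} ∈ 𝓝 (0 : M) := by
      have : Continuous (fun x : M => s y₀ + x) := continuous_const.add continuous_id
      have := this.continuousAt (x := (0 : M)).preimage_mem_nhds
        (hOopen.mem_nhds (by simpa using hsO))
      exact this
    obtain ⟨m, hm⟩ := hU.mem_iff.mp h1
    have hVsub : (V (m + 1) : Set M) ⊆ {x : M | s y₀ + x ∈ O} := (hVU m).trans hm
    set n := m + 1
    have hA : IsOpen ((g n) ⁻¹' {z : M | z - g n y₀ ∈ (V n : Set M)}) := by
      refine (hgood n).1.isOpen_preimage _ ?_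
      exact (V n).isOpen.preimage (continuous_id.sub continuous_const)
    have hy₀A : y₀ ∈ (g n) ⁻¹' {z : M | z - g n y₀ ∈ (V n : Set M)} := by
      simp only [Set.mem_preimage, Set.mem_setOf_eq, sub_self]
      exact zero_mem _
    filter_upwards [hA.mem_nhds hy₀A] with y hy
    have h2 : s y - s y₀ ∈ (V n : Set M) := by
      have := (V n).add_mem ((V n).add_mem (hclose n y)
        (hy : g n y - g n y₀ ∈ (V n : Set M))) ((V n).neg_mem (hclose n y₀))
      have heq : s y - g n y + (g n y - g n y₀) + -(s y₀ - g n y₀) = s y - s y₀ := by abel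
      rwa [heq] at this
    have h3 : s y = s y₀ + (s y - s y₀) := by abel
    rw [h3]
    exact hVsub h2
  · -- section property
    intro y
    have key : ∀ m, y - f (s y) ∈ (Wsub m : Set N) := by
      intro m
      have h1 : y - f (g m y) ∈ Wsub m := (hgood m).2 y
      have h2 : f (s y) - f (g m y) ∈ Wsub m := by
        rw [← map_sub]
        exact ⟨s y - g m y, hclose m y, rfl⟩
      have h3 : y - f (s y) = (y - f (g m y)) - (f (s y) - f (g m y)) := by abel
      rw [h3]
      exact (Wsub m).sub_mem h1 h2
    have hzero : y - f (s y) = 0 := by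
      by_contra hne
      have : {y - f (s y)}ᶜ ∈ 𝓝 (0 : N) :=
        (isOpen_compl_singleton).mem_nhds (by simpa using (Ne.symm hne))
      obtain ⟨m, hm⟩ := hW.mem_iff.mp this
      exact hm (hWsubW m (key (m + 1))) rfl
    have := sub_eq_zero.mp hzero
    exact this.symm
end

section
/- The p-adic numbers ℚ_p are self-dual under Pontryagin duality: there is a topological group isomorphism Hom_cont(ℚ_p, ℚ/ℤ) ≅ ℚ_p, where the left side carries the compact-open topology and ℚ/ℤ the discrete topology. -/
/-- The discrete group `ℚ/ℤ`. -/
def QZ : Type := ℚ ⧸ AddSubgroup.zmultiples (1 : ℚ)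

noncomputable instance : AddCommGroup QZ :=
  inferInstanceAs (AddCommGroup (ℚ ⧸ AddSubgroup.zmultiples (1 : ℚ)))

instance : TopologicalSpace QZ := ⊥
instance : DiscreteTopology QZ := ⟨rfl⟩
instance : IsTopologicalAddGroup QZ where
  continuous_add := continuous_of_discreteTopology
  continuous_neg := continuous_of_discreteTopology

/-- The subgroup of `C(M, P)` consisting of continuous additive homomorphisms. -/
def CHomAdd (M P : Type) [AddCommGroup M] [TopologicalSpace M]
    [AddCommGroup P] [TopologicalSpace P] [IsTopologicalAddGroup P] :
    AddSubgroup C(M, P) where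
  carrier := {f | ∀ a b : M, f (a + b) = f a + f b}
  zero_mem' := by intro a b; simp
  add_mem' := by
    intro f g hf hg a b
    simp only [ContinuousMap.add_apply, hf a b, hg a b]
    abel
  neg_mem' := by
    intro f hf a b
    simp only [ContinuousMap.neg_apply, hf a b]
    abel

/-- The Pontryagin dual `Hom_cont(M, ℚ/ℤ)` with the compact-open topology. -/
def PontDual (M : Type) [AddCommGroup M] [TopologicalSpace M] : Type :=
  CHomAdd M QZ

noncomputable instance (M : Type) [AddCommGroup M] [TopologicalSpace M] :
    AddCommGroup (PontDual M) :=
  inferInstanceAs (AddCommGroup (CHomAdd M QZ))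

instance (M : Type) [AddCommGroup M] [TopologicalSpace M] :
    TopologicalSpace (PontDual M) :=
  inferInstanceAs (TopologicalSpace (CHomAdd M QZ))

instance (M : Type) [AddCommGroup M] [TopologicalSpace M] :
    IsTopologicalAddGroup (PontDual M) :=
  inferInstanceAs (IsTopologicalAddGroup (CHomAdd M QZ))

/-- Evaluation of a Pontryagin character. -/
def PontDual.eval {M : Type} [AddCommGroup M] [TopologicalSpace M]
    (f : PontDual M) (m : M) : QZ :=
  f.1 m

/-- The canonical evaluation map into the double dual. -/
noncomputable def pontEval (M : Type) [AddCommGroup M] [TopologicalSpace M]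
    [IsTopologicalAddGroup M] : M → PontDual (PontDual M) := fun m =>
  ⟨⟨fun f => PontDual.eval f m, by
      exact (continuous_eval_const m).comp continuous_subtype_val⟩, by
    intro a b
    show ((a + b).1 : C(M, QZ)) m = a.1 m + b.1 m
    first | rfl | (erw [AddSubgroup.coe_add]; simp)⟩

section PadicSelfDual

noncomputable def qzmk : ℚ →+ QZ := QuotientAddGroup.mk' (AddSubgroup.zmultiples (1 : ℚ))
lemma qzmk_surjective : Function.Surjective qzmk := QuotientAddGroup.mk'_surjective _
lemma qzmk_eq_zero_iff (q : ℚ) : qzmk q = 0 ↔ ∃ c : ℤ, (c : ℚ) = q := by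
  have : (qzmk q = 0) ↔ q ∈ AddSubgroup.zmultiples (1 : ℚ) := QuotientAddGroup.eq_zero_iff q
  rw [this, AddSubgroup.mem_zmultiples_iff]; simp [zsmul_eq_mul]
lemma qzmk_eq_iff (q r : ℚ) : qzmk q = qzmk r ↔ ∃ c : ℤ, (c : ℚ) = q - r := by
  rw [← sub_eq_zero, ← map_sub, qzmk_eq_zero_iff]

variable (p : ℕ) [hp : Fact p.Prime]

lemma p_cast_ne_zero : ((p : ℚ)) ≠ 0 := by exact_mod_cast hp.1.ne_zero
lemma p_real_pos : (0:ℝ) < (p:ℝ) := by exact_mod_cast hp.1.pos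

/-- integer approximation of elements of the unit ball -/
lemma exists_int_approx (w : ℚ_[p]) (hw : ‖w‖ ≤ 1) (n : ℕ) :
    ∃ m : ℤ, ‖w - (m : ℚ_[p])‖ ≤ (p : ℝ) ^ (-(n : ℤ)) := by
  set z : ℤ_[p] := ⟨w, hw⟩ with hz
  refine ⟨PadicInt.appr z n, ?_⟩
  have h1 : z - ((PadicInt.appr z n : ℤ) : ℤ_[p]) ∈ Ideal.span {(p : ℤ_[p]) ^ n} := by
    simpa using PadicInt.appr_spec n z
  have h2 : ‖z - ((PadicInt.appr z n : ℤ) : ℤ_[p])‖ ≤ (p : ℝ) ^ (-(n : ℤ)) :=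
    (PadicInt.norm_le_pow_iff_mem_span_pow _ n).2 h1
  rw [PadicInt.norm_def, PadicInt.coe_sub, PadicInt.coe_intCast] at h2
  simpa using h2

lemma exists_rep (x : ℚ_[p]) : ∃ n : ℕ, ∃ a : ℤ, ‖x - (a : ℚ_[p]) / (p : ℚ_[p]) ^ n‖ ≤ 1 := by
  obtain ⟨n, hn⟩ := pow_unbounded_of_one_lt (‖x‖) (by exact_mod_cast hp.1.one_lt : (1:ℝ) < p)
  have hpn : ‖(p : ℚ_[p]) ^ n‖ = (p : ℝ) ^ (-(n:ℤ)) := Padic.norm_p_pow n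
  have hw : ‖x * (p : ℚ_[p]) ^ n‖ ≤ 1 := by
    rw [norm_mul, hpn]
    rw [zpow_neg, zpow_natCast]
    rw [mul_inv_le_iff₀ (pow_pos (p_real_pos p) n), one_mul]
    exact hn.le
  obtain ⟨m, hm⟩ := exists_int_approx p (x * (p : ℚ_[p]) ^ n) hw n
  refine ⟨n, m, ?_⟩
  have hppos : (0:ℝ) < (p:ℝ) ^ n := pow_pos (p_real_pos p) n
  have hpne : ((p : ℚ_[p]) ^ n) ≠ 0 := by
    exact_mod_cast pow_ne_zero n (by exact_mod_cast hp.1.ne_zero : (p:ℚ_[p]) ≠ 0)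
  have : x - (m : ℚ_[p]) / (p : ℚ_[p]) ^ n = (x * (p:ℚ_[p])^n - m) / (p:ℚ_[p])^n := by
    field_simp
  rw [this, norm_div, hpn]
  rw [zpow_neg, zpow_natCast, div_eq_mul_inv, inv_inv]
  calc ‖x * (p:ℚ_[p])^n - m‖ * (p:ℝ)^n ≤ (p:ℝ)^(-(n:ℤ)) * (p:ℝ)^n := by
        exact mul_le_mul_of_nonneg_right hm hppos.le
    _ = 1 := by rw [zpow_neg, zpow_natCast]; field_simp

lemma rep_unique {x : ℚ_[p]} {n m : ℕ} {a b : ℤ}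
    (h1 : ‖x - (a : ℚ_[p]) / (p : ℚ_[p]) ^ n‖ ≤ 1)
    (h2 : ‖x - (b : ℚ_[p]) / (p : ℚ_[p]) ^ m‖ ≤ 1) :
    qzmk ((a : ℚ) / (p:ℚ) ^ n) = qzmk ((b : ℚ) / (p:ℚ) ^ m) := by
  have hpne : ((p : ℚ_[p])) ≠ 0 := by exact_mod_cast hp.1.ne_zero
  have hd : ‖(a : ℚ_[p]) / (p : ℚ_[p]) ^ n - (b : ℚ_[p]) / (p : ℚ_[p]) ^ m‖ ≤ 1 := by
    have := Padic.nonarchimedean (x - (b : ℚ_[p]) / (p : ℚ_[p]) ^ m)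
      (-(x - (a : ℚ_[p]) / (p : ℚ_[p]) ^ n))
    rw [show x - (b : ℚ_[p]) / (p : ℚ_[p]) ^ m + -(x - (a : ℚ_[p]) / (p : ℚ_[p]) ^ n)
        = (a : ℚ_[p]) / (p : ℚ_[p]) ^ n - (b : ℚ_[p]) / (p : ℚ_[p]) ^ m by ring] at this
    rw [norm_neg] at this
    exact this.trans (max_le h2 h1)
  have key : (a : ℚ_[p]) / (p : ℚ_[p]) ^ n - (b : ℚ_[p]) / (p : ℚ_[p]) ^ m
      = ((a * p ^ m - b * p ^ n : ℤ) : ℚ_[p]) / (p : ℚ_[p]) ^ (n + m) := by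
    push_cast
    field_simp
    ring
  rw [key, norm_div, Padic.norm_p_pow] at hd
  have hc : ‖((a * p ^ m - b * p ^ n : ℤ) : ℚ_[p])‖ ≤ (p:ℝ) ^ (-((n+m:ℕ):ℤ)) := by
    rw [div_le_one (zpow_pos (p_real_pos p) _)] at hd
    linarith [hd]
  have hdvd : ((p:ℤ) ^ (n+m)) ∣ (a * p ^ m - b * p ^ n) := by
    have := (Padic.norm_int_le_pow_iff_dvd (a * p ^ m - b * p ^ n) (n+m)).1 (by
      exact_mod_cast hc)
    exact_mod_cast this
  obtain ⟨c, hcc⟩ := hdvd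
  rw [qzmk_eq_iff]
  refine ⟨c, ?_⟩
  have hq : (a:ℚ) / (p:ℚ) ^ n - (b:ℚ) / (p:ℚ) ^ m
      = ((a * p ^ m - b * p ^ n : ℤ) : ℚ) / (p:ℚ) ^ (n + m) := by
    have h0 := p_cast_ne_zero p
    push_cast
    field_simp
    ring
  rw [hq, hcc]
  have h0 : ((p:ℚ)) ^ (n+m) ≠ 0 := pow_ne_zero _ (p_cast_ne_zero p)
  push_cast
  rw [mul_comm ((p:ℚ)^(n+m)) (c:ℚ), mul_div_assoc, div_self h0, mul_one]

noncomputable def psi (x : ℚ_[p]) : QZ :=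
  qzmk (((Classical.choose (Classical.choose_spec (exists_rep p x)) : ℤ) : ℚ) /
    (p:ℚ) ^ Classical.choose (exists_rep p x))

lemma psi_spec {x : ℚ_[p]} {n : ℕ} {a : ℤ}
    (h : ‖x - (a : ℚ_[p]) / (p : ℚ_[p]) ^ n‖ ≤ 1) :
    psi p x = qzmk ((a : ℚ) / (p:ℚ) ^ n) := by
  unfold psi
  exact rep_unique p (Classical.choose_spec (Classical.choose_spec (exists_rep p x))) h

lemma psi_zero_of_norm_le {x : ℚ_[p]} (h : ‖x‖ ≤ 1) : psi p x = 0 := by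
  have h0 : ‖x - ((0:ℤ) : ℚ_[p]) / (p : ℚ_[p]) ^ 0‖ ≤ 1 := by simpa using h
  rw [psi_spec p h0]
  simp [qzmk_eq_zero_iff]

lemma psi_add (x y : ℚ_[p]) : psi p (x + y) = psi p x + psi p y := by
  obtain ⟨n, a, ha⟩ := exists_rep p x
  obtain ⟨m, b, hb⟩ := exists_rep p y
  have hpne : ((p : ℚ_[p])) ≠ 0 := by exact_mod_cast hp.1.ne_zero
  have key : (x + y) - ((a * p ^ m + b * p ^ n : ℤ) : ℚ_[p]) / (p : ℚ_[p]) ^ (n + m)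
      = (x - (a : ℚ_[p]) / (p : ℚ_[p]) ^ n) + (y - (b : ℚ_[p]) / (p : ℚ_[p]) ^ m) := by
    push_cast
    field_simp
    ring
  have hsum : ‖(x + y) - ((a * p ^ m + b * p ^ n : ℤ) : ℚ_[p]) / (p : ℚ_[p]) ^ (n + m)‖ ≤ 1 := by
    rw [key]
    exact (Padic.nonarchimedean _ _).trans (max_le ha hb)
  rw [psi_spec p ha, psi_spec p hb, psi_spec p hsum, ← map_add]
  congr 1
  have h0 := p_cast_ne_zero p
  have hn0 : ((p:ℚ))^n ≠ 0 := pow_ne_zero _ h0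
  have hm0 : ((p:ℚ))^m ≠ 0 := pow_ne_zero _ h0
  push_cast
  rw [div_add_div _ _ hn0 hm0, pow_add]
  ring

lemma psi_zero : psi p 0 = 0 := psi_zero_of_norm_le p (by simp)

lemma psi_neg (x : ℚ_[p]) : psi p (-x) = -psi p x := by
  have := psi_add p x (-x)
  rw [add_neg_cancel, psi_zero] at this
  exact eq_neg_of_add_eq_zero_right this.symm

lemma norm_le_of_psi_zero {x : ℚ_[p]} (h : psi p x = 0) : ‖x‖ ≤ 1 := by
  obtain ⟨n, a, ha⟩ := exists_rep p x
  rw [psi_spec p ha, qzmk_eq_zero_iff] at h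
  obtain ⟨c, hc⟩ := h
  have hc' : ((a : ℚ_[p]) / (p : ℚ_[p]) ^ n) = (c : ℚ_[p]) := by
    have hpne : ((p : ℚ_[p])) ≠ 0 := by exact_mod_cast hp.1.ne_zero
    have : ((c : ℚ) * (p:ℚ)^n : ℚ) = (a : ℚ) := by
      rw [hc, div_mul_cancel₀ _ (pow_ne_zero _ (p_cast_ne_zero p))]
    have h2 : ((c : ℚ_[p]) * (p:ℚ_[p])^n) = (a : ℚ_[p]) := by exact_mod_cast this
    rw [← h2, mul_div_assoc, div_self (pow_ne_zero _ hpne), mul_one]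
  rw [hc'] at ha
  calc ‖x‖ = ‖(x - (c:ℚ_[p])) + (c:ℚ_[p])‖ := by ring_nf
    _ ≤ max ‖x - (c:ℚ_[p])‖ ‖(c:ℚ_[p])‖ := Padic.nonarchimedean _ _
    _ ≤ 1 := max_le ha (Padic.norm_int_le_one c)

lemma psi_int_div (a : ℤ) (n : ℕ) :
    psi p ((a : ℚ_[p]) / (p : ℚ_[p]) ^ n) = qzmk ((a : ℚ) / (p:ℚ) ^ n) :=
  psi_spec p (by simp)

lemma psi_continuous : Continuous (psi p) := by
  rw [continuous_iff_continuousAt]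
  intro x
  have hev : (fun y => psi p y) =ᶠ[nhds x] fun _ => psi p x := by
    have hball : Metric.closedBall x 1 ∈ nhds x := Metric.closedBall_mem_nhds x one_pos
    filter_upwards [hball] with y hy
    have hnorm : ‖y - x‖ ≤ 1 := by
      rw [Metric.mem_closedBall, dist_eq_norm] at hy
      exact hy
    have : psi p y = psi p (x + (y - x)) := by ring_nf
    rw [this, psi_add, psi_zero_of_norm_le p hnorm, add_zero]
  exact (continuousAt_const (y := psi p x)).congr hev.symm

/-- the character attached to `y` -/
noncomputable def chi (y : ℚ_[p]) : PontDual ℚ_[p] :=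
  ⟨⟨fun x => psi p (x * y), (psi_continuous p).comp (continuous_id.mul continuous_const)⟩,
    by intro a b; simp only [ContinuousMap.coe_mk, add_mul]; exact psi_add p _ _⟩

lemma chi_apply (y x : ℚ_[p]) : (chi p y).1 x = psi p (x * y) := rfl

lemma chi_add (y z : ℚ_[p]) : chi p (y + z) = chi p y + chi p z := by
  apply (Subtype.ext : ∀ {a1 a2 : CHomAdd ℚ_[p] QZ}, (a1 : C(ℚ_[p], QZ)) = a2 → a1 = a2)
  apply ContinuousMap.ext
  intro x
  show psi p (x * (y + z)) = ((chi p y + chi p z : PontDual ℚ_[p]).1 : C(ℚ_[p], QZ)) x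
  erw [AddSubgroup.coe_add]
  simp only [ContinuousMap.add_apply]
  rw [mul_add]
  exact psi_add p _ _

lemma norm_p_inv_gt : (1:ℝ) < ‖((p:ℚ_[p]))⁻¹‖ := by
  rw [norm_inv, Padic.norm_p, inv_inv]
  exact_mod_cast hp.1.one_lt

lemma chi_injective : Function.Injective (chi p) := by
  have key : ∀ y : ℚ_[p], chi p y = 0 → y = 0 := by
    intro y hy
    by_contra hy0
    have h1 : ∀ x : ℚ_[p], psi p (x * y) = 0 := by
      intro x
      have := congrArg (fun f : PontDual ℚ_[p] => (f.1 : C(ℚ_[p], QZ)) x) hy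
      simpa [chi_apply] using this.trans (rfl : _ = (0:QZ))
    have h2 := h1 (y⁻¹ * (p:ℚ_[p])⁻¹)
    rw [mul_comm, ← mul_assoc, mul_inv_cancel₀ hy0, one_mul] at h2
    have := norm_le_of_psi_zero p h2
    linarith [norm_p_inv_gt p]
  intro a b hab
  have : chi p (a - b) = 0 := by
    have hsub : chi p (a - b) = chi p a - chi p b := by
      have := chi_add p (a - b) b
      rw [sub_add_cancel] at this
      rw [this]; abel
    rw [hsub, hab, sub_self]
  exact sub_eq_zero.mp (key _ this)

lemma norm_le_of_psi_ball {y : ℚ_[p]} {k : ℕ}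
    (h : ∀ x : ℚ_[p], ‖x‖ ≤ (p:ℝ) ^ k → psi p (x * y) = 0) :
    ‖y‖ ≤ (p:ℝ) ^ (-(k:ℤ)) := by
  have hx : ‖((p:ℚ_[p]) ^ k)⁻¹‖ ≤ (p:ℝ) ^ k := by
    rw [norm_inv, Padic.norm_p_pow, ← zpow_natCast ((p:ℝ)) k, ← zpow_neg, neg_neg]
  have h2 := h _ hx
  have h3 := norm_le_of_psi_zero p h2
  rw [norm_mul, norm_inv, Padic.norm_p_pow, ← zpow_neg, neg_neg] at h3
  have hpk : (0:ℝ) < (p:ℝ) ^ (k:ℤ) := zpow_pos (p_real_pos p) _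
  calc ‖y‖ = ((p:ℝ) ^ (k:ℤ))⁻¹ * ((p:ℝ) ^ (k:ℤ) * ‖y‖) := by
        rw [← mul_assoc, inv_mul_cancel₀ hpk.ne', one_mul]
    _ ≤ ((p:ℝ) ^ (k:ℤ))⁻¹ * 1 := by
        apply mul_le_mul_of_nonneg_left h3 (inv_nonneg.2 hpk.le)
    _ = (p:ℝ) ^ (-(k:ℤ)) := by rw [mul_one, zpow_neg]

noncomputable def psiHom : ℚ_[p] →+ QZ := AddMonoidHom.mk' (psi p) (psi_add p)

lemma psi_zsmul (m : ℤ) (u : ℚ_[p]) : psi p ((m : ℚ_[p]) * u) = m • psi p u := by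
  have : ((m : ℚ_[p]) * u) = m • u := by rw [zsmul_eq_mul]
  rw [this]
  exact map_zsmul (psiHom p) m u

lemma qzmk_zsmul (m : ℤ) (q : ℚ) : m • qzmk q = qzmk ((m : ℚ) * q) := by
  rw [← map_zsmul, zsmul_eq_mul]

lemma torsion_rep (q : QZ) (n : ℕ) (h : ((p:ℤ) ^ n) • q = 0) :
    ∃ a : ℤ, q = qzmk ((a : ℚ) / (p:ℚ) ^ n) := by
  obtain ⟨r, rfl⟩ := qzmk_surjective q
  rw [qzmk_zsmul, qzmk_eq_zero_iff] at h
  obtain ⟨c, hc⟩ := h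
  refine ⟨c, ?_⟩
  congr 1
  have hpn : ((p:ℚ)) ^ n ≠ 0 := pow_ne_zero _ (p_cast_ne_zero p)
  rw [eq_div_iff hpn, hc]
  push_cast
  ring

lemma exists_y (G : ℚ_[p] →+ QZ) (hG : ∀ z : ℚ_[p], ‖z‖ ≤ 1 → G z = 0) :
    ∃ y : ℚ_[p], ‖y‖ ≤ 1 ∧ ∀ x, G x = psi p (x * y) := by
  have hpne : ((p : ℚ_[p])) ≠ 0 := by exact_mod_cast hp.1.ne_zero
  set t : ℕ → ℚ_[p] := fun n => ((p : ℚ_[p]) ^ n)⁻¹ with ht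
  have htors : ∀ n : ℕ, ((p:ℤ) ^ n) • G (t n) = 0 := by
    intro n
    rw [← map_zsmul]
    have : ((p:ℤ) ^ n) • t n = 1 := by
      rw [zsmul_eq_mul]
      push_cast
      exact mul_inv_cancel₀ (pow_ne_zero _ hpne)
    rw [this]
    exact hG 1 (by simp)
  set a : ℕ → ℤ := fun n => Classical.choose (torsion_rep p (G (t n)) n (htors n)) with hadef
  have ha : ∀ n, G (t n) = qzmk ((a n : ℚ) / (p:ℚ) ^ n) := fun n =>
    Classical.choose_spec (torsion_rep p (G (t n)) n (htors n))
  -- coherence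
  have coh : ∀ m n : ℕ, m ≤ n → ((p:ℤ) ^ m) ∣ (a n - a m) := by
    intro m n hmn
    have htmn : t m = ((p : ℚ_[p]) ^ (n - m)) * t n := by
      rw [ht]
      field_simp
      rw [← pow_add]
      congr 1
      omega
    have hsm : G (t m) = ((p:ℤ) ^ (n - m)) • G (t n) := by
      rw [htmn, ← map_zsmul]
      congr 1
      rw [zsmul_eq_mul]
      push_cast
      ring
    rw [ha m, ha n, qzmk_zsmul] at hsm
    have hrat : ((((p:ℤ)^(n-m) : ℤ)) : ℚ) * ((a n : ℚ) / (p:ℚ) ^ n) = (a n : ℚ) / (p:ℚ) ^ m := by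
      have h0 := p_cast_ne_zero p
      have hpow : (p:ℚ)^m * (p:ℚ)^(n-m) = (p:ℚ)^n := by rw [← pow_add]; congr 1; omega
      push_cast
      field_simp
      rw [← hpow]
      ring
    rw [hrat, qzmk_eq_iff] at hsm
    obtain ⟨c, hc⟩ := hsm
    refine ⟨-c, ?_⟩
    have h0 : ((p:ℚ)) ^ m ≠ 0 := pow_ne_zero _ (p_cast_ne_zero p)
    have hc' : (c:ℚ) * (p:ℚ)^m = (a m : ℚ) - (a n : ℚ) := by
      rw [div_sub_div_same] at hc
      rw [hc]
      rw [div_mul_cancel₀ _ h0]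
    have hq : ((a n - a m : ℤ) : ℚ) = (((p:ℤ)^m * (-c) : ℤ) : ℚ) := by
      push_cast
      linear_combination hc'
    exact_mod_cast hq
  -- the sequence of integer approximations is Cauchy
  have hbound : ∀ N n n' : ℕ, N ≤ n → N ≤ n' →
      dist ((a n : ℚ_[p])) ((a n' : ℚ_[p])) ≤ (p:ℝ) ^ (-(N:ℤ)) := by
    have key : ∀ m n : ℕ, m ≤ n → ‖((a n : ℚ_[p])) - (a m : ℚ_[p])‖ ≤ (p:ℝ) ^ (-(m:ℤ)) := by
      intro m n hmn
      have : (((a n - a m : ℤ)) : ℚ_[p]) = ((a n : ℚ_[p])) - (a m : ℚ_[p]) := by push_cast; ring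
      rw [← this]
      exact (Padic.norm_int_le_pow_iff_dvd _ _).2 (coh m n hmn)
    intro N n n' hn hn'
    have hmono : ∀ M N : ℕ, N ≤ M → (p:ℝ) ^ (-(M:ℤ)) ≤ (p:ℝ) ^ (-(N:ℤ)) := by
      intro M N h
      apply zpow_le_zpow_right₀ (by exact_mod_cast hp.1.one_le)
      omega
    rcases le_total n n' with h | h
    · rw [dist_eq_norm, ← norm_neg, neg_sub]
      exact (key n n' h).trans (hmono n N hn)
    · rw [dist_eq_norm]
      exact (key n' n h).trans (hmono n' N hn')
  have hcauchy : CauchySeq (fun n => ((a n : ℚ_[p]))) := by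
    apply cauchySeq_of_le_tendsto_0 (fun N : ℕ => (p:ℝ) ^ (-(N:ℤ)))
      (fun n m N hn hm => hbound N n m hn hm)
    have : (fun N : ℕ => (p:ℝ) ^ (-(N:ℤ))) = fun N : ℕ => ((p:ℝ)⁻¹) ^ N := by
      funext N
      rw [zpow_neg, ← zpow_natCast, inv_zpow, zpow_natCast]
    rw [this]
    apply tendsto_pow_atTop_nhds_zero_of_lt_one (by positivity)
    rw [inv_lt_one₀ (p_real_pos p)]
    exact_mod_cast hp.1.one_lt
  obtain ⟨y, hy⟩ := cauchySeq_tendsto_of_complete hcauchy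
  have hyn : ∀ n : ℕ, ‖y - (a n : ℚ_[p])‖ ≤ (p:ℝ) ^ (-(n:ℤ)) := by
    intro n
    have htt : Filter.Tendsto (fun m => ‖((a m : ℚ_[p])) - (a n : ℚ_[p])‖)
        Filter.atTop (nhds ‖y - (a n : ℚ_[p])‖) :=
      ((hy.sub tendsto_const_nhds).norm)
    apply le_of_tendsto htt
    filter_upwards [Filter.eventually_ge_atTop n] with m hm
    have := hbound n m n hm le_rfl
    rwa [dist_eq_norm] at this
  have hy1 : ‖y‖ ≤ 1 := by
    have h0 := hyn 0
    calc ‖y‖ = ‖(y - ((a 0 : ℚ_[p]))) + (a 0 : ℚ_[p])‖ := by ring_nf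
      _ ≤ max ‖y - ((a 0 : ℚ_[p]))‖ ‖((a 0 : ℚ_[p]))‖ := Padic.nonarchimedean _ _
      _ ≤ 1 := max_le (by simpa using h0) (Padic.norm_int_le_one _)
  refine ⟨y, hy1, ?_⟩
  intro x
  -- choose n with ‖x‖ ≤ p ^ n
  obtain ⟨n, hn⟩ := pow_unbounded_of_one_lt (‖x‖) (by exact_mod_cast hp.1.one_lt : (1:ℝ) < p)
  have hw : ‖x * (p : ℚ_[p]) ^ n‖ ≤ 1 := by
    rw [norm_mul, Padic.norm_p_pow]
    rw [zpow_neg, zpow_natCast]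
    rw [mul_inv_le_iff₀ (pow_pos (p_real_pos p) n), one_mul]
    exact hn.le
  set w := x * (p : ℚ_[p]) ^ n with hwdef
  obtain ⟨m, hm⟩ := exists_int_approx p w hw n
  have hxsplit : x = (m : ℚ_[p]) * t n + t n * (w - m) := by
    have : x = t n * w := by
      rw [ht, hwdef]
      field_simp
    rw [this]
    ring
  have htn_norm : ‖t n‖ = (p:ℝ) ^ (n:ℤ) := by
    rw [ht]
    simp only []
    rw [norm_inv, Padic.norm_p_pow, ← zpow_neg, neg_neg]
  have hsmall : ‖t n * (w - m)‖ ≤ 1 := by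
    rw [norm_mul, htn_norm]
    calc (p:ℝ) ^ (n:ℤ) * ‖w - (m:ℚ_[p])‖ ≤ (p:ℝ) ^ (n:ℤ) * (p:ℝ) ^ (-(n:ℤ)) :=
          mul_le_mul_of_nonneg_left hm (zpow_nonneg (p_real_pos p).le _)
      _ = 1 := by rw [← zpow_add₀ (p_real_pos p).ne']; simp
  -- compute G x
  have hGx : G x = qzmk ((m * a n : ℤ) / (p:ℚ) ^ n) := by
    rw [hxsplit, map_add]
    have h1 : G ((m : ℚ_[p]) * t n) = m • G (t n) := by
      have : ((m : ℚ_[p]) * t n) = m • t n := by rw [zsmul_eq_mul]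
      rw [this, map_zsmul]
    rw [h1, hG _ hsmall, add_zero, ha n, qzmk_zsmul]
    congr 1
    push_cast
    ring
  -- compute psi (x * y)
  have hpsix : psi p (x * y) = qzmk ((m * a n : ℤ) / (p:ℚ) ^ n) := by
    have hsplit2 : x * y = (m : ℚ_[p]) * t n * (a n : ℚ_[p])
        + ((m : ℚ_[p]) * t n * (y - (a n : ℚ_[p])) + t n * (w - m) * y) := by
      rw [hxsplit]
      ring
    have hz1 : ‖(m : ℚ_[p]) * t n * (y - (a n : ℚ_[p]))‖ ≤ 1 := by
      rw [norm_mul, norm_mul, htn_norm]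
      calc ‖(m:ℚ_[p])‖ * (p:ℝ) ^ (n:ℤ) * ‖y - (a n : ℚ_[p])‖
          ≤ 1 * (p:ℝ) ^ (n:ℤ) * (p:ℝ) ^ (-(n:ℤ)) := by
            apply mul_le_mul
            · exact mul_le_mul_of_nonneg_right (Padic.norm_int_le_one m)
                (zpow_nonneg (p_real_pos p).le _)
            · exact hyn n
            · exact norm_nonneg _
            · positivity
        _ = 1 := by rw [one_mul, ← zpow_add₀ (p_real_pos p).ne']; simp
    have hz2 : ‖t n * (w - m) * y‖ ≤ 1 := by
      rw [norm_mul]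
      calc ‖t n * (w - (m:ℚ_[p]))‖ * ‖y‖ ≤ 1 * 1 :=
            mul_le_mul hsmall hy1 (norm_nonneg _) zero_le_one
        _ = 1 := by ring
    have hzsum : ‖(m : ℚ_[p]) * t n * (y - (a n : ℚ_[p])) + t n * (w - m) * y‖ ≤ 1 :=
      (Padic.nonarchimedean _ _).trans (max_le hz1 hz2)
    rw [hsplit2, psi_add, psi_zero_of_norm_le p hzsum, add_zero]
    have hterm : (m : ℚ_[p]) * t n * (a n : ℚ_[p]) = ((m * a n : ℤ) : ℚ_[p]) / (p:ℚ_[p]) ^ n := by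
      rw [ht]
      push_cast
      ring
    rw [hterm, psi_int_div]
  rw [hGx, hpsix]


lemma chi_surjective : Function.Surjective (chi p) := by
  intro f
  set F : ℚ_[p] →+ QZ := AddMonoidHom.mk' (fun x => (f.1 : C(ℚ_[p], QZ)) x)
    (fun a b => f.2 a b) with hF
  have hFcont : Continuous F := (f.1 : C(ℚ_[p], QZ)).continuous
  -- find k such that F vanishes on the ball of radius p^(-k)
  have hopen : IsOpen (F ⁻¹' {0}) := (isOpen_discrete _).preimage hFcont
  have h0mem : (0:ℚ_[p]) ∈ F ⁻¹' {0} := by simp [map_zero]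
  obtain ⟨ε, hε, hball⟩ := Metric.isOpen_iff.1 hopen 0 h0mem
  obtain ⟨k, hk⟩ := PadicInt.exists_pow_neg_lt p hε
  have hkvan : ∀ x : ℚ_[p], ‖x‖ ≤ (p:ℝ) ^ (-(k:ℤ)) → F x = 0 := by
    intro x hx
    have : x ∈ Metric.ball (0:ℚ_[p]) ε := by
      rw [Metric.mem_ball, dist_zero_right]
      exact lt_of_le_of_lt hx hk
    exact hball this
  set G : ℚ_[p] →+ QZ := F.comp (AddMonoidHom.mk' (fun z => (p:ℚ_[p]) ^ k * z)
    (fun a b => by ring)) with hGdef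
  have hG : ∀ z : ℚ_[p], ‖z‖ ≤ 1 → G z = 0 := by
    intro z hz
    apply hkvan
    show ‖(p:ℚ_[p]) ^ k * z‖ ≤ _
    rw [norm_mul, Padic.norm_p_pow]
    calc (p:ℝ) ^ (-(k:ℤ)) * ‖z‖ ≤ (p:ℝ) ^ (-(k:ℤ)) * 1 :=
          mul_le_mul_of_nonneg_left hz (zpow_nonneg (p_real_pos p).le _)
      _ = (p:ℝ) ^ (-(k:ℤ)) := mul_one _
  obtain ⟨y, hy1, hGy⟩ := exists_y p G hG
  have hpkne : ((p:ℚ_[p]) ^ k) ≠ 0 := pow_ne_zero _ (by exact_mod_cast hp.1.ne_zero)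
  refine ⟨((p:ℚ_[p]) ^ k)⁻¹ * y, ?_⟩
  apply (Subtype.ext : ∀ {a1 a2 : CHomAdd ℚ_[p] QZ}, (a1 : C(ℚ_[p], QZ)) = a2 → a1 = a2)
  apply ContinuousMap.ext
  intro x
  show psi p (x * (((p:ℚ_[p]) ^ k)⁻¹ * y)) = (f.1 : C(ℚ_[p], QZ)) x
  have h1 : (f.1 : C(ℚ_[p], QZ)) x = F x := rfl
  have h2 : F x = G (((p:ℚ_[p]) ^ k)⁻¹ * x) := by
    show F x = F ((p:ℚ_[p]) ^ k * (((p:ℚ_[p]) ^ k)⁻¹ * x))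
    congr 1
    field_simp
  have h3 : G (((p:ℚ_[p]) ^ k)⁻¹ * x) = psi p ((((p:ℚ_[p]) ^ k)⁻¹ * x) * y) := hGy _
  rw [h1, h2, h3]
  congr 1
  ring

noncomputable def chiEquiv : ℚ_[p] ≃ PontDual ℚ_[p] :=
  Equiv.ofBijective (chi p) ⟨chi_injective p, chi_surjective p⟩

lemma chiEquiv_symm_add (u v : PontDual ℚ_[p]) :
    (chiEquiv p).symm (u + v) = (chiEquiv p).symm u + (chiEquiv p).symm v := by
  apply (chiEquiv p).injective
  rw [Equiv.apply_symm_apply]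
  show u + v = chi p _
  rw [chi_add]
  show u + v = (chiEquiv p) ((chiEquiv p).symm u) + (chiEquiv p) ((chiEquiv p).symm v)
  rw [Equiv.apply_symm_apply, Equiv.apply_symm_apply]

lemma chi_zero : chi p 0 = 0 := by
  have := chi_add p 0 0
  rw [add_zero] at this
  exact left_eq_add.mp this

lemma chiEquiv_symm_zero : (chiEquiv p).symm 0 = 0 := by
  rw [Equiv.symm_apply_eq]
  show (0 : PontDual ℚ_[p]) = chi p 0
  rw [chi_zero]

lemma chi_continuous : Continuous (chi p) := by
  have hmap : Continuous (fun y : ℚ_[p] =>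
      (⟨fun x => psi p (x * y), (psi_continuous p).comp (continuous_id.mul continuous_const)⟩ :
        C(ℚ_[p], QZ))) := by
    apply ContinuousMap.continuous_of_continuous_uncurry
    exact (psi_continuous p).comp (continuous_snd.mul continuous_fst)
  exact Continuous.subtype_mk hmap _

noncomputable def eHom : PontDual ℚ_[p] →+ ℚ_[p] :=
  AddMonoidHom.mk' (chiEquiv p).symm (chiEquiv_symm_add p)

lemma eHom_continuous : Continuous ((chiEquiv p).symm) := by
  apply continuous_of_continuousAt_zero (eHom p)
  rw [ContinuousAt, map_zero]
  rw [NormedAddCommGroup.tendsto_nhds_zero]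
  intro ε hε
  obtain ⟨k, hk⟩ := PadicInt.exists_pow_neg_lt p hε
  set K : Set ℚ_[p] := Metric.closedBall (0:ℚ_[p]) ((p:ℝ) ^ k) with hKdef
  have hK : IsCompact K := isCompact_closedBall _ _
  set V : Set (PontDual ℚ_[p]) :=
    {f : PontDual ℚ_[p] | Set.MapsTo (f.1 : C(ℚ_[p], QZ)) K {0}} with hVdef
  have hopenV : IsOpen V := by
    have : V = (fun f : PontDual ℚ_[p] => (f.1 : C(ℚ_[p], QZ))) ⁻¹'
        {g : C(ℚ_[p], QZ) | Set.MapsTo g K {0}} := rfl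
    rw [this]
    exact (ContinuousMap.isOpen_setOf_mapsTo hK (isOpen_discrete _)).preimage
      continuous_subtype_val
  have h0V : (0 : PontDual ℚ_[p]) ∈ V := by
    intro x _
    show ((0 : CHomAdd ℚ_[p] QZ).1 : C(ℚ_[p], QZ)) x ∈ ({0} : Set QZ)
    rw [ZeroMemClass.coe_zero]
    simp
  filter_upwards [hopenV.mem_nhds h0V] with f hf
  have hb : ‖(eHom p) f‖ ≤ (p:ℝ) ^ (-(k:ℤ)) := by
    set y := (chiEquiv p).symm f with hy
    have hfy : chi p y = f := by
      show (chiEquiv p) ((chiEquiv p).symm f) = f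
      exact Equiv.apply_symm_apply _ _
    apply norm_le_of_psi_ball p
    intro x hx
    have hxK : x ∈ K := by
      rw [hKdef, Metric.mem_closedBall, dist_zero_right]
      exact hx
    have := hf hxK
    rw [← hfy] at this
    exact (by simpa [chi_apply] using this : psi p (x * y) = 0)
  exact lt_of_le_of_lt hb hk

end PadicSelfDual

/-- The `p`-adic numbers are self-dual under Pontryagin duality: there is
a topological group isomorphism `Hom_cont(ℚ_p, ℚ/ℤ) ≅ ℚ_p`, where the left side
carries the compact-open topology and `ℚ/ℤ` the discrete topology. -/
theorem stmt_9 (p : ℕ) [Fact p.Prime] :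
    ∃ e : PontDual ℚ_[p] ≃ₜ ℚ_[p],
      ∀ x y : PontDual ℚ_[p], e (x + y) = e x + e y := by
  refine ⟨{ toEquiv := (chiEquiv p).symm,
            continuous_toFun := eHom_continuous p,
            continuous_invFun := ?_ }, ?_⟩
  · show Continuous (chiEquiv p)
    exact chi_continuous p
  · intro x y
    exact chiEquiv_symm_add p x y
end

section
/- Let G be a profinite group, H a closed subgroup of G. Then there exists a continuous section of the quotient map G → H\G of G onto the space of right cosets, and consequently G is homeomorphic to H × (H\G). -/
open Set Pointwise

section Aux

variable {G : Type} [Group G] [TopologicalSpace G] [IsTopologicalGroup G]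
  [CompactSpace G] [T2Space G] [TotallyDisconnectedSpace G]

/-- In a profinite group, every neighborhood of `1` contains an open normal subgroup. -/
private lemma aux_exists_onsub {V : Set G} (hV : V ∈ nhds (1 : G)) :
    ∃ U : OpenNormalSubgroup G, (U : Set G) ⊆ V := by
  obtain ⟨W, hWclopen, h1W, hWV⟩ :=
    compact_exists_isClopen_in_isOpen (isOpen_interior (s := V))
      (mem_interior_iff_mem_nhds.mpr hV)
  obtain ⟨U, hU⟩ :=
    IsTopologicalGroup.exist_openNormalSubgroup_sub_clopen_nhds_of_one hWclopen h1W
  exact ⟨U, hU.trans (hWV.trans interior_subset)⟩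

/-- A set which is stable under right multiplication by an open subgroup is open. -/
private lemma aux_isOpen_of_mul (U : OpenNormalSubgroup G) {S : Set G}
    (hS : ∀ x ∈ S, ∀ u ∈ U, x * u ∈ S) : IsOpen S := by
  rw [isOpen_iff_mem_nhds]
  intro x hx
  have hxU : x • (U : Set G) ∈ nhds x := by
    refine IsOpen.mem_nhds (U.toOpenSubgroup.isOpen.smul x) ?_
    exact ⟨1, one_mem _, mul_one x⟩
  refine Filter.mem_of_superset hxU ?_
  rintro y ⟨u, hu, rfl⟩
  exact hS x hx u hu

/-- The inductive step: refine an approximate transversal mod `U` to one mod `U'`. -/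
private lemma aux_step (H : Subgroup G) (U U' : OpenNormalSubgroup G) (hle : U' ≤ U)
    (T : Set G)
    (hcov : ∀ g : G, ∃ t ∈ T, t * g⁻¹ ∈ H)
    (hUC : ∀ t ∈ T, ∀ u ∈ U, t * u ∈ T) :
    ∃ T' : Set G, T' ⊆ T ∧ IsClosed T' ∧
      (∀ g : G, ∃ t ∈ T', t * g⁻¹ ∈ H) ∧
      (∀ t ∈ T', ∀ u ∈ U', t * u ∈ T') ∧
      (∀ t ∈ T', ∀ t' ∈ T', (∃ h ∈ H, ∃ u ∈ U', t' = h * t * u) →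
        t⁻¹ * t' ∈ U') := by
  classical
  set K : Subgroup G := H ⊔ U'.toOpenSubgroup.toSubgroup with hKdef
  have hHK : H ≤ K := le_sup_left
  have hU'K : U'.toOpenSubgroup.toSubgroup ≤ K := le_sup_right
  have hKset : (K : Set G) = (H : Set G) * (U'.toOpenSubgroup.toSubgroup : Set G) :=
    Subgroup.mul_normal _ _
  have hconj : ∀ u ∈ U', ∀ a : G, a * u * a⁻¹ ∈ U' := fun u hu a =>
    U'.isNormal'.conj_mem u hu a
  -- a choice of element of `T` in each right `K`-coset
  have hc : ∀ q : Quotient (QuotientGroup.rightRel K), ∃ t, t ∈ T ∧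
      Quotient.mk (QuotientGroup.rightRel K) t = q := by
    intro q
    induction q using Quotient.ind with
    | _ g =>
      obtain ⟨t, htT, hth⟩ := hcov g
      refine ⟨t, htT, Quotient.sound ((QuotientGroup.rightRel_apply).mpr ?_)⟩
      simpa using K.inv_mem (hHK hth)
  choose c hcT hcq using hc
  set w : G → G := fun g => c (Quotient.mk (QuotientGroup.rightRel K) g) with hw
  have hwT : ∀ g, w g ∈ T := fun g => hcT _
  have hwK : ∀ g, g * (w g)⁻¹ ∈ K := by
    intro g
    exact (QuotientGroup.rightRel_apply).mp
      (Quotient.exact (hcq (Quotient.mk (QuotientGroup.rightRel K) g)))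
  have hwconst : ∀ g g', g' * g⁻¹ ∈ K → w g = w g' := by
    intro g g' hgg'
    have : Quotient.mk (QuotientGroup.rightRel K) g = Quotient.mk _ g' :=
      Quotient.sound ((QuotientGroup.rightRel_apply).mpr hgg')
    simp only [hw, this]
  have hww : ∀ g, w (w g) = w g := by
    intro g
    have := congrArg c (hcq (Quotient.mk (QuotientGroup.rightRel K) g))
    simpa only [hw] using this
  set T' : Set G := {x : G | (w x)⁻¹ * x ∈ U'} with hT'
  have hT'sub : T' ⊆ T := by
    intro x hx
    have := hUC (w x) (hwT x) _ (hle hx)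
    rwa [mul_inv_cancel_left] at this
  have hT'UC : ∀ t ∈ T', ∀ u ∈ U', t * u ∈ T' := by
    intro x hx u hu
    have hwx : w (x * u) = w x := by
      refine (hwconst x (x * u) ?_).symm
      have : x * u * x⁻¹ ∈ U' := hconj u hu x
      exact hU'K this
    show (w (x * u))⁻¹ * (x * u) ∈ U'
    rw [hwx, ← mul_assoc]
    exact mul_mem hx hu
  have hT'closed : IsClosed T' := by
    rw [← isOpen_compl_iff]
    refine aux_isOpen_of_mul U' (fun x hx u hu hmem => hx ?_)
    have := hT'UC _ hmem _ (inv_mem hu)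
    rwa [mul_assoc, mul_inv_cancel, mul_one] at this
  refine ⟨T', hT'sub, hT'closed, ?_, hT'UC, ?_⟩
  · -- covering
    intro g
    have hg : g * (w g)⁻¹ ∈ (H : Set G) * (U'.toOpenSubgroup.toSubgroup : Set G) := by
      rw [← hKset]; exact hwK g
    obtain ⟨h, hh, u, hu, huh⟩ := hg
    have hh' : h ∈ H := hh
    have hu' : u ∈ U' := hu
    have huh' : h * u = g * (w g)⁻¹ := huh
    refine ⟨h⁻¹ * g, ?_, by simpa using H.inv_mem hh'⟩
    have hgeq : h⁻¹ * g = u * w g := by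
      have hueq : u = h⁻¹ * (g * (w g)⁻¹) := by rw [← huh']; group
      rw [hueq]; group
    show (w (h⁻¹ * g))⁻¹ * (h⁻¹ * g) ∈ U'
    have hwt : w (h⁻¹ * g) = w g := by
      rw [← hww g]
      refine (hwconst (w g) (h⁻¹ * g) ?_).symm
      rw [hgeq, mul_inv_cancel_right]
      exact hU'K hu'
    rw [hwt, hgeq, ← mul_assoc]
    have := hconj u hu' ((w g)⁻¹)
    rwa [inv_inv] at this
  · -- injectivity mod U'
    rintro t ht t' ht' ⟨h, hh, u, hu, rfl⟩
    have hwtt : w (h * t * u) = w t := by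
      refine (hwconst t (h * t * u) ?_).symm
      have : h * t * u * t⁻¹ = h * (t * u * t⁻¹) := by group
      rw [this]
      exact mul_mem (hHK hh) (hU'K (hconj u hu t))
    have h1 : (w t)⁻¹ * t ∈ U' := ht
    have h2 : (w t)⁻¹ * (h * t * u) ∈ U' := by
      have h3 : (w (h * t * u))⁻¹ * (h * t * u) ∈ U' := ht'
      rwa [hwtt] at h3
    have : t⁻¹ * (h * t * u) = ((w t)⁻¹ * t)⁻¹ * ((w t)⁻¹ * (h * t * u)) := by group
    rw [this]
    exact mul_mem (inv_mem h1) h2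

/-- Existence of a closed transversal for a closed subgroup of a second-countable
profinite group. -/
private lemma aux_transversal [SecondCountableTopology G]
    (H : Subgroup G) (hH : IsClosed (H : Set G)) :
    ∃ T : Set G, IsClosed T ∧ (∀ g : G, ∃ t ∈ T, t * g⁻¹ ∈ H) ∧
      (∀ t ∈ T, ∀ t' ∈ T, t' * t⁻¹ ∈ H → t' = t) := by
  classical
  obtain ⟨V, hV⟩ := (nhds (1 : G)).exists_antitone_basis
  choose W hW using fun n => aux_exists_onsub (G := G) (hV.1.mem_of_mem (i := n) trivial)
  -- decreasing sequence of open normal subgroups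
  let Utop : OpenNormalSubgroup G := ⟨⊤, by constructor; intro n hn g; trivial⟩
  let Useq : ℕ → OpenNormalSubgroup G := fun n =>
    Nat.rec Utop (fun n Un => Un ⊓ W n) n
  have hUanti : ∀ n, Useq (n + 1) ≤ Useq n := fun n => inf_le_left
  have hUW : ∀ n, Useq (n + 1) ≤ W n := fun n => inf_le_right
  have hUbasis : ∀ V' ∈ nhds (1 : G), ∃ n, ((Useq n).toOpenSubgroup.toSubgroup : Set G) ⊆ V' := by
    intro V' hV'
    obtain ⟨n, -, hn⟩ := hV.1.mem_iff.mp hV'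
    exact ⟨n + 1, (SetLike.coe_subset_coe.mpr (hUW n)).trans ((hW n).trans hn)⟩
  -- the approximating sequence of closed sets
  let P : ℕ → Set G → Prop := fun n T =>
    IsClosed T ∧ (∀ g : G, ∃ t ∈ T, t * g⁻¹ ∈ H) ∧
      (∀ t ∈ T, ∀ u ∈ Useq n, t * u ∈ T) ∧
      (∀ t ∈ T, ∀ t' ∈ T, (∃ h ∈ H, ∃ u ∈ Useq n, t' = h * t * u) → t⁻¹ * t' ∈ Useq n)
  have base : P 0 univ := by
    refine ⟨isClosed_univ, fun g => ⟨g, mem_univ g, by simpa using H.one_mem⟩,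
      fun _ _ _ _ => mem_univ _, fun t _ t' _ _ => ?_⟩
    show t⁻¹ * t' ∈ (⊤ : Subgroup G)
    exact Subgroup.mem_top _
  have stepEx : ∀ n (T : Set G), P n T → ∃ T', T' ⊆ T ∧ P (n + 1) T' := by
    intro n T hT
    obtain ⟨T', h1, h2, h3, h4, h5⟩ :=
      aux_step H (Useq n) (Useq (n + 1)) (hUanti n) T hT.2.1 hT.2.2.1
    exact ⟨T', h1, h2, h3, h4, h5⟩
  let F : ∀ n : ℕ, {T : Set G // P n T} := fun n =>
    Nat.rec ⟨univ, base⟩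
      (fun n ih => ⟨Classical.choose (stepEx n ih.1 ih.2),
        (Classical.choose_spec (stepEx n ih.1 ih.2)).2⟩) n
  have hFmono : ∀ n, (F (n + 1)).1 ⊆ (F n).1 := fun n =>
    (Classical.choose_spec (stepEx n (F n).1 (F n).2)).1
  refine ⟨⋂ n, (F n).1, isClosed_iInter fun n => (F n).2.1, ?_, ?_⟩
  · -- covering
    intro g
    have hC : (⋂ n, ((F n).1 ∩ {x : G | x * g⁻¹ ∈ (H : Set G)})).Nonempty := by
      refine IsCompact.nonempty_iInter_of_sequence_nonempty_isCompact_isClosed _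
        (fun n => inter_subset_inter_left _ (hFmono n)) (fun n => ?_) ?_ (fun n => ?_)
      · obtain ⟨t, ht, hth⟩ := (F n).2.2.1 g
        exact ⟨t, ht, hth⟩
      · exact (((F 0).2.1.inter (hH.preimage (continuous_mul_right g⁻¹))).isCompact)
      · exact (F n).2.1.inter (hH.preimage (continuous_mul_right g⁻¹))
    obtain ⟨t, ht⟩ := hC
    simp only [mem_iInter, mem_inter_iff] at ht
    exact ⟨t, mem_iInter.mpr fun n => (ht n).1, (ht 0).2⟩
  · -- uniqueness
    intro t ht t' ht' hmem
    simp only [mem_iInter] at ht ht'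
    have hU : ∀ n, t⁻¹ * t' ∈ Useq n := by
      intro n
      refine (F n).2.2.2.2 t (ht n) t' (ht' n) ⟨t' * t⁻¹, hmem, 1, one_mem _, by group⟩
    have : t⁻¹ * t' = 1 := by
      by_contra hne
      obtain ⟨n, hn⟩ := hUbasis {t⁻¹ * t'}ᶜ
        (isOpen_compl_singleton.mem_nhds (by simpa using (Ne.symm hne)))
      exact hn (hU n) rfl
    have := inv_mul_eq_one.mp this
    exact this.symm

/-- The right coset space of a closed subgroup of a profinite group is Hausdorff. -/
private lemma aux_t2 (H : Subgroup G) (hH : IsClosed (H : Set G)) :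
    T2Space (Quotient (QuotientGroup.rightRel H)) := by
  constructor
  intro q1 q2 hne
  induction q1 using Quotient.ind with
  | _ g1 =>
  induction q2 using Quotient.ind with
  | _ g2 =>
  set C : Set G := (fun h => h * g1) '' (H : Set G) with hC
  have hCcompact : IsCompact C := (hH.isCompact).image (continuous_mul_right g1)
  have hCsub : C ⊆ {g2}ᶜ := by
    rintro x ⟨h, hh, rfl⟩ hx
    refine hne (Quotient.sound ((QuotientGroup.rightRel_apply).mpr ?_))
    have hxg : g2 = h * g1 := (mem_singleton_iff.mp hx).symm
    rw [hxg]
    simpa using hh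
  obtain ⟨V, hV, hCV⟩ :=
    compact_open_separated_mul_right hCcompact isOpen_compl_singleton hCsub
  obtain ⟨V', hV'open, h1V', hV'V⟩ := exists_open_nhds_one_mul_subset hV
  obtain ⟨U, hU⟩ := aux_exists_onsub (G := G) (hV'open.mem_nhds h1V')
  set SA : Set G := {x | ∃ h ∈ (H : Set G), ∃ u ∈ (U : Set G), x = h * g1 * u} with hSA
  set SB : Set G := {x | ∃ h ∈ (H : Set G), ∃ u ∈ (U : Set G), x = h * g2 * u} with hSB
  have hSAopen : IsOpen SA := by
    refine aux_isOpen_of_mul U ?_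
    rintro x ⟨h, hh, u, hu, rfl⟩ u' hu'
    exact ⟨h, hh, u * u', mul_mem hu hu', by group⟩
  have hSBopen : IsOpen SB := by
    refine aux_isOpen_of_mul U ?_
    rintro x ⟨h, hh, u, hu, rfl⟩ u' hu'
    exact ⟨h, hh, u * u', mul_mem hu hu', by group⟩
  have hsatA : ∀ x y : G, x ∈ SA → y * x⁻¹ ∈ H → y ∈ SA := by
    rintro x y ⟨h, hh, u, hu, rfl⟩ hyx
    refine ⟨(y * (h * g1 * u)⁻¹) * h, H.mul_mem hyx hh, u, hu, by group⟩
  have hsatB : ∀ x y : G, x ∈ SB → y * x⁻¹ ∈ H → y ∈ SB := by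
    rintro x y ⟨h, hh, u, hu, rfl⟩ hyx
    refine ⟨(y * (h * g2 * u)⁻¹) * h, H.mul_mem hyx hh, u, hu, by group⟩
  have hdisj : ∀ x, x ∈ SA → x ∈ SB → False := by
    rintro x ⟨h, hh, u, hu, hx1⟩ ⟨h', hh', u', hu', hx2⟩
    have hg2 : g2 = (h'⁻¹ * h * g1) * (u * u'⁻¹) := by
      have : h * g1 * u = h' * g2 * u' := by rw [← hx1, ← hx2]
      have h2 : g2 = h'⁻¹ * (h * g1 * u) * u'⁻¹ := by rw [this]; group
      rw [h2]; group
    have hmem : g2 ∈ C * V := by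
      refine ⟨h'⁻¹ * h * g1, ⟨h'⁻¹ * h, H.mul_mem (H.inv_mem hh') hh, rfl⟩,
        u * u'⁻¹, ?_, hg2.symm⟩
      exact hV'V ⟨u, hU hu, u'⁻¹, hU (inv_mem hu'), rfl⟩
    exact (hCV hmem) rfl
  have hpreA : Quotient.mk (QuotientGroup.rightRel H) ⁻¹'
      (Quotient.mk (QuotientGroup.rightRel H) '' SA) = SA := by
    refine Subset.antisymm ?_ (subset_preimage_image _ _)
    rintro x ⟨y, hy, hxy⟩
    exact hsatA y x hy ((QuotientGroup.rightRel_apply).mp (Quotient.exact hxy))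
  have hpreB : Quotient.mk (QuotientGroup.rightRel H) ⁻¹'
      (Quotient.mk (QuotientGroup.rightRel H) '' SB) = SB := by
    refine Subset.antisymm ?_ (subset_preimage_image _ _)
    rintro x ⟨y, hy, hxy⟩
    exact hsatB y x hy ((QuotientGroup.rightRel_apply).mp (Quotient.exact hxy))
  refine ⟨Quotient.mk _ '' SA, Quotient.mk _ '' SB, ?_, ?_,
    ⟨g1, ⟨1, H.one_mem, 1, one_mem _, by group⟩, rfl⟩,
    ⟨g2, ⟨1, H.one_mem, 1, one_mem _, by group⟩, rfl⟩, ?_⟩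
  · rw [isOpen_coinduced (f := Quotient.mk (QuotientGroup.rightRel H))]
    rwa [hpreA]
  · rw [isOpen_coinduced (f := Quotient.mk (QuotientGroup.rightRel H))]
    rwa [hpreB]
  · rw [Set.disjoint_left]
    rintro a ⟨x, hx, rfl⟩ ⟨y, hy, hyx⟩
    exact hdisj x hx (hsatB y x hy ((QuotientGroup.rightRel_apply).mp (Quotient.exact hyx)))

end Aux

/-- Let `G` be a profinite group (compact, Hausdorff, totally
disconnected, with a countable basis of neighborhoods of the identity) and `H` a closed
subgroup.  Then the quotient map `G → H\G` onto the space of right cosets admits a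
continuous section `s`, and consequently `G` is homeomorphic to `H × (H\G)` via
`(h, Hg) ↦ h · s (Hg)`. -/
theorem stmt_10
    (G : Type) [Group G] [TopologicalSpace G] [IsTopologicalGroup G]
    [CompactSpace G] [T2Space G] [TotallyDisconnectedSpace G] [SecondCountableTopology G]
    (H : Subgroup G) (hH : IsClosed (H : Set G)) :
    ∃ s : Quotient (QuotientGroup.rightRel H) → G,
      Continuous s ∧
      (∀ q : Quotient (QuotientGroup.rightRel H), Quotient.mk _ (s q) = q) ∧
      IsHomeomorph (fun p : H × Quotient (QuotientGroup.rightRel H) =>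
        (p.1 : G) * s p.2) := by
  classical
  haveI : T2Space (Quotient (QuotientGroup.rightRel H)) := aux_t2 H hH
  obtain ⟨T, hTclosed, hTcov, hTuniq⟩ := aux_transversal H hH
  haveI : CompactSpace T := isCompact_iff_compactSpace.mp hTclosed.isCompact
  haveI : CompactSpace H := isCompact_iff_compactSpace.mp hH.isCompact
  set f : T → Quotient (QuotientGroup.rightRel H) :=
    fun t => Quotient.mk (QuotientGroup.rightRel H) (t : G) with hf
  have hfcont : Continuous f := continuous_quot_mk.comp continuous_subtype_val
  have hfbij : Function.Bijective f := by
    constructor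
    · rintro ⟨t, ht⟩ ⟨t', ht'⟩ hff
      have := (QuotientGroup.rightRel_apply).mp (Quotient.exact hff)
      exact (Subtype.ext (hTuniq t ht t' ht' this)).symm
    · intro q
      induction q using Quotient.ind with
      | _ g =>
        obtain ⟨t, ht, hth⟩ := hTcov g
        refine ⟨⟨t, ht⟩, ?_⟩
        exact (Quotient.sound ((QuotientGroup.rightRel_apply).mpr hth)).symm
  let e : T ≃ₜ Quotient (QuotientGroup.rightRel H) :=
    Continuous.homeoOfEquivCompactToT2 (f := Equiv.ofBijective f hfbij) hfcont
  set s : Quotient (QuotientGroup.rightRel H) → G := fun q => ((e.symm q : T) : G) with hs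
  have hscont : Continuous s := continuous_subtype_val.comp e.symm.continuous
  have hsec : ∀ q, Quotient.mk (QuotientGroup.rightRel H) (s q) = q := fun q =>
    e.apply_symm_apply q
  have hmk_mul : ∀ (h x : G), h ∈ H →
      Quotient.mk (QuotientGroup.rightRel H) (h * x) = Quotient.mk _ x := by
    intro h x hh
    refine Quotient.sound ((QuotientGroup.rightRel_apply).mpr ?_)
    have : x * (h * x)⁻¹ = h⁻¹ := by group
    rw [this]
    exact H.inv_mem hh
  set φ : H × Quotient (QuotientGroup.rightRel H) → G :=
    fun p => (p.1 : G) * s p.2 with hφ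
  have hφcont : Continuous φ :=
    (continuous_subtype_val.comp continuous_fst).mul (hscont.comp continuous_snd)
  have hφbij : Function.Bijective φ := by
    constructor
    · rintro ⟨h1, q1⟩ ⟨h2, q2⟩ heq
      simp only [hφ] at heq
      have hq : q1 = q2 := by
        have e1 : Quotient.mk (QuotientGroup.rightRel H) ((h1 : G) * s q1) = q1 := by
          rw [hmk_mul _ _ h1.2, hsec]
        have e2 : Quotient.mk (QuotientGroup.rightRel H) ((h2 : G) * s q2) = q2 := by
          rw [hmk_mul _ _ h2.2, hsec]
        rw [← e1, ← e2, heq]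
      subst hq
      have : (h1 : G) = h2 := mul_right_cancel heq
      exact Prod.ext (Subtype.ext this) rfl
    · intro g
      set q := Quotient.mk (QuotientGroup.rightRel H) g with hq
      have hmem : g * (s q)⁻¹ ∈ H := by
        have : Quotient.mk (QuotientGroup.rightRel H) (s q) = Quotient.mk _ g := hsec q
        exact (QuotientGroup.rightRel_apply).mp (Quotient.exact this)
      exact ⟨⟨⟨g * (s q)⁻¹, hmem⟩, q⟩, by simp [hφ]⟩
  have hhomeo := (Continuous.homeoOfEquivCompactToT2
    (f := Equiv.ofBijective φ hφbij) hφcont).isHomeomorph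
  exact ⟨s, hscont, hsec, hhomeo⟩
end
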